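/- arXiv:math/0502199 — 6 statements merged into one kernel-verified Lean document; each statement's English description precedes it below -/
import Mathlib

section
/- Let 0 ≤ θ < 1/4 and c > 0. There exist arbitrarily large real x such that for all integers a, b with x^{1/2} − c·x^θ ≤ a ≤ b ≤ x^{1/2} + c·x^θ, we have |x − ab| ≥ (1/8)·x^{1/2}. In particular one may take any sufficiently large x with fractional part {√x} = 1/4. -/
theorem stmt_2 (θ c : ℝ) (hθ0 : 0 ≤ θ) (hθ : θ < 1/4) (hc : 0 < c) :
    ∀ X : ℝ, ∃ x : ℝ, X ≤ x ∧ Int.fract (Real.sqrt x) = 1/4 ∧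
      ∀ a b : ℤ, x ^ ((1:ℝ)/2) - c * x ^ θ ≤ (a : ℝ) → (a : ℝ) ≤ (b : ℝ) →
        (b : ℝ) ≤ x ^ ((1:ℝ)/2) + c * x ^ θ →
        (1/8) * x ^ ((1:ℝ)/2) ≤ |x - (a : ℝ) * (b : ℝ)| := by
  intro X
  have hε : (0:ℝ) < 1 - 4*θ := by linarith
  have h1 := tendsto_rpow_atTop hε
  obtain ⟨y₀, hy₀⟩ := Filter.eventually_atTop.mp (h1.eventually_ge_atTop (8*c^2/3))
  obtain ⟨n, hn⟩ := exists_nat_ge (max (max y₀ (Real.sqrt X)) 1)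
  set m : ℝ := (n:ℝ) + 1/4 with hm
  have hmn : (n:ℝ) ≤ m := by rw [hm]; linarith
  have hm1 : (1:ℝ) ≤ m :=
    le_trans (le_trans (le_max_right _ _) hn) hmn
  have hm0 : (0:ℝ) < m := by linarith
  have hmy0 : y₀ ≤ m :=
    le_trans (le_trans (le_max_left _ _) (le_trans (le_max_left _ _) hn)) hmn
  have hmsX : Real.sqrt X ≤ m :=
    le_trans (le_trans (le_max_right _ _) (le_trans (le_max_left _ _) hn)) hmn
  have hXle : X ≤ m^2 := by
    rcases le_or_gt X 0 with h | h
    · nlinarith [sq_nonneg m]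
    · nlinarith [Real.sq_sqrt h.le, Real.sqrt_nonneg X]
  have hxhalf : (m^2) ^ ((1:ℝ)/2) = m := by
    rw [← Real.sqrt_eq_rpow, Real.sqrt_sq hm0.le]
  have hxθ : (m^2) ^ θ = m ^ (2*θ) := by
    rw [← Real.rpow_natCast m 2, ← Real.rpow_mul hm0.le]
    norm_num
  have h4θ : (0:ℝ) < m ^ (4*θ) := Real.rpow_pos_of_pos hm0 _
  have hpow : m ^ (1-4*θ) * m ^ (4*θ) = m := by
    rw [← Real.rpow_add hm0]
    norm_num
  have hsq : m ^ (2*θ) * m ^ (2*θ) = m ^ (4*θ) := by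
    rw [← Real.rpow_add hm0]; ring_nf
  have key : c^2 * m^(4*θ) ≤ (3/8)*m := by
    have h := hy₀ m hmy0
    have h2 : (8*c^2/3) * m^(4*θ) ≤ m := by
      calc (8*c^2/3) * m^(4*θ) ≤ m^(1-4*θ) * m^(4*θ) :=
            mul_le_mul_of_nonneg_right h h4θ.le
        _ = m := hpow
    have h3 : (8*c^2/3)*m^(4*θ) = (8/3)*(c^2*m^(4*θ)) := by ring
    linarith
  refine ⟨m^2, hXle, ?_, ?_⟩
  · rw [Real.sqrt_sq hm0.le]
    have : m = 1/4 + ((n:ℤ) : ℝ) := by push_cast [hm]; ring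
    rw [this, Int.fract_add_intCast]
    exact Int.fract_eq_self.mpr ⟨by norm_num, by norm_num⟩
  · intro a b ha hab hb
    rw [hxhalf, hxθ] at ha hb
    rw [hxhalf]
    set d : ℝ := c * m ^ (2*θ) with hd
    have hd0 : 0 ≤ d := by
      have := Real.rpow_pos_of_pos hm0 (2*θ)
      positivity
    have hu1 : m - (a:ℝ) ≤ d := by linarith
    have hu2 : -d ≤ m - (a:ℝ) := by linarith
    have hv1 : (b:ℝ) - m ≤ d := by linarith
    have hv2 : -d ≤ (b:ℝ) - m := by linarith
    have hint : (1:ℝ)/2 ≤ |2*m - ((a:ℝ)+(b:ℝ))| := by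
      have heq : 2*m - ((a:ℝ)+(b:ℝ)) = ((2*(n:ℤ) - a - b : ℤ) : ℝ) + 1/2 := by
        push_cast [hm]; ring
      rw [heq]
      set k : ℤ := 2*(n:ℤ) - a - b
      rcases le_or_gt 0 k with h | h
      · have hk : (0:ℝ) ≤ (k:ℝ) := by exact_mod_cast h
        rw [abs_of_nonneg (by linarith)]; linarith
      · have hk : (k:ℝ) ≤ -1 := by exact_mod_cast (by omega : k ≤ -1)
        rw [abs_of_nonpos (by linarith)]; linarith
    have hdecomp : m^2 - (a:ℝ)*(b:ℝ)
        = m*(2*m - ((a:ℝ)+(b:ℝ))) + (m - (a:ℝ))*((b:ℝ) - m) := by ring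
    have habs : |m*(2*m - ((a:ℝ)+(b:ℝ)))| - |(m - (a:ℝ))*((b:ℝ) - m)|
        ≤ |m^2 - (a:ℝ)*(b:ℝ)| := by
      rw [hdecomp]
      have := abs_sub_abs_le_abs_sub (m*(2*m - ((a:ℝ)+(b:ℝ))))
        (-((m - (a:ℝ))*((b:ℝ) - m)))
      simpa [sub_neg_eq_add] using this
    have hP : m/2 ≤ |m*(2*m - ((a:ℝ)+(b:ℝ)))| := by
      rw [abs_mul, abs_of_pos hm0]
      have := mul_le_mul_of_nonneg_left hint hm0.le
      linarith
    have hQ : |(m - (a:ℝ))*((b:ℝ) - m)| ≤ d*d := by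
      rw [abs_mul]
      have h1 : |m - (a:ℝ)| ≤ d := abs_le.mpr ⟨hu2, hu1⟩
      have h2 : |(b:ℝ) - m| ≤ d := abs_le.mpr ⟨hv2, hv1⟩
      exact mul_le_mul h1 h2 (abs_nonneg _) hd0
    have hdd : d*d ≤ (3/8)*m := by
      have heq : d*d = c^2*(m^(2*θ)*m^(2*θ)) := by rw [hd]; ring
      rw [hsq] at heq
      linarith [key, heq.le]
    linarith
end

section
/- Let x be a real number with x ≥ 16 and {√x} = 1/4, let 0 ≤ θ < 1/4, c > 0, and suppose c²·x^{2θ} ≤ (1/8)√x. Then for all integers a, b in the interval [√x − c·x^θ, √x + c·x^θ], one has |x − ab| ≥ (1/8)√x. -/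
theorem stmt_3 (x θ c : ℝ) (hx : 16 ≤ x) (hfrac : Int.fract (Real.sqrt x) = 1/4)
    (hθ0 : 0 ≤ θ) (hθ : θ < 1/4) (hc : 0 < c)
    (hsmall : c ^ 2 * x ^ (2 * θ) ≤ (1/8) * Real.sqrt x) :
    ∀ a b : ℤ, Real.sqrt x - c * x ^ θ ≤ (a : ℝ) → (a : ℝ) ≤ Real.sqrt x + c * x ^ θ →
      Real.sqrt x - c * x ^ θ ≤ (b : ℝ) → (b : ℝ) ≤ Real.sqrt x + c * x ^ θ →
      (1/8) * Real.sqrt x ≤ |x - (a : ℝ) * (b : ℝ)| := by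
  intro a b ha1 ha2 hb1 hb2
  set s := Real.sqrt x with hsdef
  have hx0 : (0:ℝ) ≤ x := by linarith
  have hs2 : s ^ 2 = x := Real.sq_sqrt hx0
  have hs4 : (4:ℝ) ≤ s := by
    have h16 : Real.sqrt 16 ≤ s := Real.sqrt_le_sqrt hx
    rwa [show (16:ℝ) = 4 ^ 2 by norm_num, Real.sqrt_sq (by norm_num : (0:ℝ) ≤ 4)] at h16
  have hxt0 : 0 < x ^ θ := Real.rpow_pos_of_pos (by linarith) θ
  have hct : 0 < c * x ^ θ := mul_pos hc hxt0
  have hpow : x ^ (2 * θ) = (x ^ θ) ^ 2 := by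
    rw [two_mul, Real.rpow_add (by linarith : (0:ℝ) < x)]; ring
  have hsq : (c * x ^ θ) ^ 2 ≤ s / 8 := by
    have : c ^ 2 * (x ^ θ) ^ 2 ≤ (1/8) * s := by rw [← hpow]; exact hsmall
    nlinarith
  have hcs : c * x ^ θ ≤ s / 4 := by nlinarith
  set m : ℝ := ((a : ℝ) + (b : ℝ)) / 2 with hmdef
  have hm : 3 * s / 4 ≤ m := by
    simp only [hmdef]; linarith
  -- fractional part
  have hfloor : s = (⌊s⌋ : ℝ) + 1/4 := by
    have h := hfrac
    rw [Int.fract] at h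
    linarith
  -- |s - m| ≥ 1/4
  set k : ℤ := 4 * ⌊s⌋ + 1 - 2 * (a + b) with hkdef
  have hk0 : k ≠ 0 := by omega
  have hk1 : (1:ℝ) ≤ |(k : ℝ)| := by
    rw [← Int.cast_abs]
    exact_mod_cast Int.one_le_abs hk0
  have hkr : (k : ℝ) = 4 * (s - m) := by
    simp only [hkdef, hmdef]
    push_cast
    linarith [hfloor]
  have hsm : 1/4 ≤ |s - m| := by
    rw [hkr, abs_mul, abs_of_pos (by norm_num : (0:ℝ) < 4)] at hk1
    linarith
  have hsm0 : 0 < s + m := by linarith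
  have hxm : (1/4) * (s + m) ≤ |x - m ^ 2| := by
    have h : x - m ^ 2 = (s - m) * (s + m) := by rw [← hs2]; ring
    rw [h, abs_mul, abs_of_pos hsm0]
    nlinarith [abs_nonneg (s - m)]
  set d : ℝ := ((b : ℝ) - (a : ℝ)) / 2 with hddef
  have hd2 : d ^ 2 ≤ (c * x ^ θ) ^ 2 :=
    sq_le_sq' (by simp only [hddef]; linarith) (by simp only [hddef]; linarith)
  have key : |x - m ^ 2| ≤ |x - (a : ℝ) * b| + d ^ 2 := by
    have e : x - m ^ 2 = (x - (a : ℝ) * b) + -(d ^ 2) := by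
      simp only [hmdef, hddef]; ring
    calc |x - m ^ 2| = |(x - (a : ℝ) * b) + -(d ^ 2)| := by rw [e]
      _ ≤ |x - (a : ℝ) * b| + |(-(d ^ 2))| := abs_add_le _ _
      _ = |x - (a : ℝ) * b| + d ^ 2 := by rw [abs_neg, abs_of_nonneg (sq_nonneg d)]
  have hd2' : d ^ 2 ≤ s / 8 := hd2.trans hsq
  linarith [hxm, key, hd2', hm, hs4]
end

section
/- There exists a constant C > 0 such that for every real x ≥ 1, there exist integers d with x^{1/4} < d ≤ 4·x^{1/4} and D ≥ 1 such that |√(x + d²) − D| ≤ C/x^{1/4}. -/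
set_option maxHeartbeats 1000000 in


theorem stmt_6 :
    ∃ C : ℝ, 0 < C ∧ ∀ x : ℝ, 1 ≤ x →
      ∃ d D : ℤ, x ^ ((1:ℝ)/4) < (d : ℝ) ∧ (d : ℝ) ≤ 4 * x ^ ((1:ℝ)/4) ∧ 1 ≤ D ∧
        |Real.sqrt (x + (d : ℝ) ^ 2) - (D : ℝ)| ≤ C / x ^ ((1:ℝ)/4) := by
  refine ⟨4, by norm_num, fun x hx => ?_⟩
  have hx0 : (0:ℝ) < x := by linarith
  set t := x ^ ((1:ℝ)/4) with ht
  have ht1 : (1:ℝ) ≤ t := Real.one_le_rpow hx (by norm_num)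
  have ht0 : (0:ℝ) < t := by linarith
  have htsq : t * t = Real.sqrt x := by
    rw [Real.sqrt_eq_rpow, ht, ← Real.rpow_add hx0]
    norm_num
  have hsx0 : (0:ℝ) ≤ Real.sqrt x := Real.sqrt_nonneg x
  have hsx1 : (1:ℝ) ≤ Real.sqrt x := by nlinarith
  set a := Real.sqrt (x + 2 * Real.sqrt x) with ha
  have ha0 : 0 ≤ a := Real.sqrt_nonneg _
  have ha2 : a * a = x + 2 * Real.sqrt x := Real.mul_self_sqrt (by positivity)
  have ha1 : (1:ℝ) ≤ a := by nlinarith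
  have hasx : Real.sqrt x ≤ a := by nlinarith [Real.sq_sqrt hx0.le]
  have haub : a ≤ Real.sqrt x + 1 := by nlinarith [Real.sq_sqrt hx0.le]
  set D : ℤ := ⌈a⌉ with hD
  have hDa : a ≤ (D:ℝ) := Int.le_ceil a
  have hDa' : (D:ℝ) ≤ a + 1 := by
    have := Int.ceil_lt_add_one a
    linarith
  have hD1R : (1:ℝ) ≤ (D:ℝ) := le_trans ha1 hDa
  have hD1 : (1:ℤ) ≤ D := by exact_mod_cast hD1R
  have hDxlb : 2 * Real.sqrt x ≤ (D:ℝ)^2 - x := by nlinarith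
  have hDxub : (D:ℝ)^2 - x ≤ 7 * Real.sqrt x := by nlinarith
  set s := Real.sqrt ((D:ℝ)^2 - x) with hs
  have hs0 : 0 ≤ s := Real.sqrt_nonneg _
  have hs2 : s * s = (D:ℝ)^2 - x := Real.mul_self_sqrt (by nlinarith)
  have hslb : t < s := by nlinarith
  have hsub : s ≤ 3 * t := by nlinarith
  set d : ℤ := ⌈s⌉ with hd
  have hds : s ≤ (d:ℝ) := Int.le_ceil s
  have hds' : (d:ℝ) ≤ s + 1 := by
    have := Int.ceil_lt_add_one s
    linarith
  have hdlb : t < (d:ℝ) := lt_of_lt_of_le hslb hds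
  have hdub : (d:ℝ) ≤ 4 * t := by linarith
  refine ⟨d, D, hdlb, hdub, hD1, ?_⟩
  set E := Real.sqrt (x + (d:ℝ)^2) with hE
  have hE0 : 0 ≤ E := Real.sqrt_nonneg _
  have hE2 : E * E = x + (d:ℝ)^2 := Real.mul_self_sqrt (by nlinarith)
  have hEge : (D:ℝ) ≤ E := by nlinarith
  have h1 : (E - (D:ℝ)) * (E + (D:ℝ)) ≤ 7 * t := by nlinarith
  have h2 : 2 * (t * t) ≤ E + (D:ℝ) := by nlinarith
  have hti : (4 / t) * t = 4 := by field_simp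
  have hEle : E - (D:ℝ) ≤ 4 / t := by
    nlinarith [mul_pos ht0 ht0, mul_nonneg (sub_nonneg.2 hEge) (sub_nonneg.2 h2)]
  rw [abs_le]
  constructor
  · have : 0 < 4 / t := by positivity
    linarith
  · linarith
end

section
/- There exist constants c₁, c₂ > 0 such that for every real x ≥ 2, there exist integers a, b with |a − √x| ≤ c₂·x^{1/4}, |b − √x| ≤ c₂·x^{1/4}, and |x − ab| ≤ c₁·x^{1/4}. -/
theorem stmt_7 :
    ∃ c₁ c₂ : ℝ, 0 < c₁ ∧ 0 < c₂ ∧ ∀ x : ℝ, 2 ≤ x →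
      ∃ a b : ℤ, |(a : ℝ) - Real.sqrt x| ≤ c₂ * x ^ ((1:ℝ)/4) ∧
        |(b : ℝ) - Real.sqrt x| ≤ c₂ * x ^ ((1:ℝ)/4) ∧
        |x - (a : ℝ) * (b : ℝ)| ≤ c₁ * x ^ ((1:ℝ)/4) := by
  refine ⟨5, 3, by norm_num, by norm_num, fun x hx => ?_⟩
  have hx0 : (0:ℝ) ≤ x := by linarith
  set s := Real.sqrt x with hs
  have hs2 : s ^ 2 = x := Real.sq_sqrt hx0
  have hs0 : 0 ≤ s := Real.sqrt_nonneg x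
  have hs1 : 1 ≤ s := by
    rw [show (1:ℝ) = Real.sqrt 1 by simp]
    exact Real.sqrt_le_sqrt (by linarith)
  set q := x ^ ((1:ℝ)/4) with hq
  have hqs : q ^ 2 = s := by
    rw [hq, hs, ← Real.rpow_natCast (x ^ ((1:ℝ)/4)) 2, ← Real.rpow_mul hx0,
      Real.sqrt_eq_rpow]
    norm_num
  have hq0 : 0 ≤ q := Real.rpow_nonneg hx0 _
  have hq1 : 1 ≤ q := by nlinarith
  set m : ℤ := ⌈s⌉ with hm
  have hm1 : s ≤ (m:ℝ) := Int.le_ceil s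
  have hm2 : (m:ℝ) < s + 1 := Int.ceil_lt_add_one s
  have ht0 : (0:ℝ) ≤ (m:ℝ)^2 - x := by nlinarith
  set t := (m:ℝ)^2 - x with ht
  have htsq : Real.sqrt t ^ 2 = t := Real.sq_sqrt ht0
  have hts0 : 0 ≤ Real.sqrt t := Real.sqrt_nonneg t
  set d : ℤ := ⌊Real.sqrt t⌋ with hd
  have hd0 : (0:ℝ) ≤ (d:ℝ) := by
    exact_mod_cast Int.floor_nonneg.mpr hts0
  have hdle : (d:ℝ) ≤ Real.sqrt t := Int.floor_le _
  have hdlt : Real.sqrt t < (d:ℝ) + 1 := Int.lt_floor_add_one _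
  have hd2 : (d:ℝ)^2 ≤ t := by nlinarith
  have ht2 : t < ((d:ℝ)+1)^2 := by nlinarith
  have htb : t ≤ 3 * s := by nlinarith
  have hdq : (d:ℝ) ≤ 2 * q := by
    have h1 : Real.sqrt t ≤ Real.sqrt ((2*q)^2) :=
      Real.sqrt_le_sqrt (by nlinarith [sq_nonneg q])
    rw [Real.sqrt_sq (by linarith : (0:ℝ) ≤ 2*q)] at h1
    linarith
  have hkey : x - ((m:ℝ) - (d:ℝ)) * ((m:ℝ) + (d:ℝ)) = (d:ℝ)^2 - t := by
    rw [ht]; ring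
  have hlow : -(2*(d:ℝ) + 1) ≤ (d:ℝ)^2 - t := by nlinarith [ht2]
  refine ⟨m - d, m + d, ?_, ?_, ?_⟩
  · push_cast
    rw [abs_le]
    constructor <;> linarith
  · push_cast
    rw [abs_le]
    constructor <;> linarith
  · push_cast
    rw [abs_le, hkey]
    constructor <;> linarith
end

section
/- Let θ ∈ [0, 1/2) and suppose F : ℝ → ℝ is a positive function such that for every x ≥ 1 the interval [x − F(x), x + F(x)] contains an integer of the form ab with a, b integers in [x^{1/2} − x^θ, x^{1/2} + x^θ]. Then there exist arbitrarily large x with F(x) ≥ (1/100)·x^{1/2−θ}. -/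
private lemma rpow_half_le_of_sq {u v : ℝ} (hu : 0 ≤ u) (hv : 0 ≤ v) (h : u ≤ v ^ 2) :
    u ^ ((1:ℝ)/2) ≤ v := by
  have h2 : u ^ ((1:ℝ)/2) ≤ (v ^ 2) ^ ((1:ℝ)/2) :=
    Real.rpow_le_rpow hu h (by norm_num)
  rwa [show (v:ℝ) ^ 2 = v ^ ((2:ℕ):ℝ) by rw [Real.rpow_natCast],
    ← Real.rpow_mul hv, show ((2:ℕ):ℝ) * (1/2) = 1 by norm_num, Real.rpow_one] at h2

private lemma two_rpow_half_le : (2:ℝ) ^ ((1:ℝ)/2) ≤ 3/2 := by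
  rw [← Real.sqrt_eq_rpow]
  rw [show (3:ℝ)/2 = Real.sqrt ((3/2)^2) from (Real.sqrt_sq (by norm_num)).symm]
  exact Real.sqrt_le_sqrt (by norm_num)

set_option maxHeartbeats 1000000 in
theorem stmt_15 (θ : ℝ) (hθ0 : 0 ≤ θ) (hθ : θ < 1/2) (F : ℝ → ℝ)
    (hFpos : ∀ x : ℝ, 0 < F x)
    (hF : ∀ x : ℝ, 1 ≤ x → ∃ a b : ℤ,
      x ^ ((1:ℝ)/2) - x ^ θ ≤ (a : ℝ) ∧ (a : ℝ) ≤ x ^ ((1:ℝ)/2) + x ^ θ ∧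
      x ^ ((1:ℝ)/2) - x ^ θ ≤ (b : ℝ) ∧ (b : ℝ) ≤ x ^ ((1:ℝ)/2) + x ^ θ ∧
      x - F x ≤ ((a * b : ℤ) : ℝ) ∧ ((a * b : ℤ) : ℝ) ≤ x + F x) :
    ∀ X : ℝ, ∃ x : ℝ, X ≤ x ∧ (1/100) * x ^ ((1:ℝ)/2 - θ) ≤ F x := by
  intro X
  by_contra hcon
  push_neg at hcon
  have hε0 : (0:ℝ) < 1/2 - θ := by linarith
  set Y : ℝ := max X (max 1 ((6:ℝ) ^ ((1:ℝ)/(1/2 - θ)))) with hYdef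
  have hY1 : (1:ℝ) ≤ Y := le_trans (le_max_left 1 _) (le_max_right X _)
  have hY0 : (0:ℝ) < Y := lt_of_lt_of_le one_pos hY1
  have hYX : X ≤ Y := le_max_left _ _
  have hY6 : (6:ℝ) ^ ((1:ℝ)/(1/2 - θ)) ≤ Y := le_trans (le_max_right 1 _) (le_max_right X _)
  clear_value Y
  set P : ℝ := Y ^ θ with hPdef
  set Q : ℝ := Y ^ ((1:ℝ)/2) with hQdef
  set R : ℝ := Y ^ ((1:ℝ)/2 - θ) with hRdef
  have hP1 : 1 ≤ P := Real.one_le_rpow hY1 hθ0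
  have hP0 : (0:ℝ) < P := by linarith
  have hP2 : 1 ≤ P ^ 2 := by nlinarith
  have hR6 : 6 ≤ R := by
    have h2 : ((6:ℝ) ^ ((1:ℝ)/(1/2-θ))) ^ ((1:ℝ)/2 - θ) ≤ Y ^ ((1:ℝ)/2 - θ) :=
      Real.rpow_le_rpow (Real.rpow_nonneg (by norm_num) _) hY6 hε0.le
    rwa [← Real.rpow_mul (by norm_num : (0:ℝ) ≤ 6), one_div_mul_cancel hε0.ne',
      Real.rpow_one] at h2
  have hR0 : (0:ℝ) < R := by linarith
  have hQPR : Q = P * R := by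
    rw [hPdef, hRdef, hQdef, ← Real.rpow_add hY0]; ring_nf
  have hYQ : Y = Q * Q := by
    rw [hQdef, ← Real.rpow_add hY0]; norm_num
  have hQ0 : (0:ℝ) < Q := by rw [hQPR]; positivity
  have hYPR : Y = P ^ 2 * R ^ 2 := by rw [hYQ, hQPR]; ring
  have h2rp : ∀ t : ℝ, t ≤ 1/2 → (2:ℝ) ^ t ≤ 3/2 := fun t ht1 =>
    (Real.rpow_le_rpow_of_exponent_le (by norm_num) ht1).trans two_rpow_half_le
  have h2θ : (2*Y) ^ θ ≤ (3/2) * P := by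
    rw [Real.mul_rpow (by norm_num) hY0.le, hPdef]
    exact mul_le_mul_of_nonneg_right (h2rp θ hθ.le) (Real.rpow_nonneg hY0.le θ)
  have h2ε : (2*Y) ^ ((1:ℝ)/2 - θ) ≤ (3/2) * R := by
    rw [Real.mul_rpow (by norm_num) hY0.le, hRdef]
    exact mul_le_mul_of_nonneg_right (h2rp _ (by linarith)) (Real.rpow_nonneg hY0.le _)
  have hQlow : ∀ u : ℝ, Y ≤ u → Q ≤ u ^ ((1:ℝ)/2) := by
    intro u hu
    rw [hQdef]
    exact Real.rpow_le_rpow hY0.le hu (by norm_num)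
  clear_value P Q R
  set d : ℝ := R / 10 with hddef
  have hd0 : (0:ℝ) < d := by rw [hddef]; linarith
  clear_value d
  set M : ℕ := ⌈(50:ℝ) * P ^ 2⌉₊ with hMdef
  have hMge : (50:ℝ) * P ^ 2 ≤ (M:ℝ) := Nat.le_ceil _
  have hMle : (M:ℝ) ≤ 50 * P ^ 2 + 1 := (Nat.ceil_lt_add_one (by positivity)).le
  clear_value M
  set x : ℕ → ℝ := fun i => Y + i * d with hxdef
  have hx_eq : ∀ i : ℕ, x i = Y + i * d := fun i => rfl
  clear_value x
  have hx_lb : ∀ i : ℕ, Y ≤ x i := by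
    intro i
    rw [hx_eq i]
    have : (0:ℝ) ≤ (i:ℝ) * d := mul_nonneg (Nat.cast_nonneg i) hd0.le
    linarith
  have hx1 : ∀ i : ℕ, 1 ≤ x i := fun i => le_trans hY1 (hx_lb i)
  have hx0 : ∀ i : ℕ, (0:ℝ) < x i := fun i => lt_of_lt_of_le one_pos (hx1 i)
  have hx_ub : ∀ i : ℕ, i < M → x i ≤ Y + (26/5) * P ^ 2 * R := by
    intro i hi
    have h1 : (i:ℝ) ≤ (M:ℝ) := by exact_mod_cast hi.le
    have h2 : (i:ℝ) * d ≤ (50 * P ^ 2 + 1) * d :=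
      mul_le_mul_of_nonneg_right (h1.trans hMle) hd0.le
    have h3 : R ≤ P ^ 2 * R := by
      have := mul_le_mul_of_nonneg_right hP2 hR0.le
      linarith
    have h4 : (50 * P ^ 2 + 1) * d = 5 * P ^ 2 * R + R / 10 := by rw [hddef]; ring
    rw [hx_eq i]
    linarith
  have hx2Y : ∀ i : ℕ, i < M → x i ≤ 2 * Y := by
    intro i hi
    have h1 := hx_ub i hi
    have h2 : (26/5) * P ^ 2 * R ≤ P ^ 2 * R ^ 2 := by
      have := mul_le_mul_of_nonneg_left hR6 (mul_nonneg (sq_nonneg P) hR0.le)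
      nlinarith
    linarith [hYPR.ge, hYPR.le]
  have hxθ : ∀ i : ℕ, i < M → (x i) ^ θ ≤ (3/2) * P := fun i hi =>
    (Real.rpow_le_rpow (hx0 i).le (hx2Y i hi) hθ0).trans h2θ
  have hxε : ∀ i : ℕ, i < M → (x i) ^ ((1:ℝ)/2 - θ) ≤ (3/2) * R := fun i hi =>
    (Real.rpow_le_rpow (hx0 i).le (hx2Y i hi) hε0.le).trans h2ε
  have hFi : ∀ i : ℕ, i < M → F (x i) < (3/200) * R := by
    intro i hi
    have h1 := hcon (x i) (hYX.trans (hx_lb i))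
    have h2 := hxε i hi
    linarith
  have hxhalf_lb : ∀ i : ℕ, Q ≤ (x i) ^ ((1:ℝ)/2) := fun i => hQlow (x i) (hx_lb i)
  have hxhalf_ub : ∀ i : ℕ, i < M → (x i) ^ ((1:ℝ)/2) ≤ Q + (13/5) * P := by
    intro i hi
    apply rpow_half_le_of_sq (hx0 i).le (by positivity)
    have h1 := hx_ub i hi
    have h2 : (Q + 13/5 * P) ^ 2 = Y + 26/5 * P ^ 2 * R + 169/25 * P ^ 2 := by
      rw [hYQ, hQPR]; ring
    have h3 : (0:ℝ) ≤ P ^ 2 := sq_nonneg P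
    linarith
  choose a b ha1 ha2 hb1 hb2 hab1 hab2 using fun i : ℕ => hF (x i) (hx1 i)
  set L : ℤ := ⌈Q - (3/2) * P⌉ with hLdef
  set U : ℤ := ⌊Q + (41/10) * P⌋ with hUdef
  have hmem : ∀ c : ℕ → ℤ, (∀ i, x i ^ ((1:ℝ)/2) - x i ^ θ ≤ (c i : ℝ)) →
      (∀ i, (c i : ℝ) ≤ x i ^ ((1:ℝ)/2) + x i ^ θ) →
      ∀ i : ℕ, i < M → c i ∈ Finset.Icc L U := by
    intro c hc1 hc2 i hi
    rw [Finset.mem_Icc]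
    constructor
    · apply Int.ceil_le.mpr
      have h1 := hc1 i
      have h2 := hxhalf_lb i
      have h3 := hxθ i hi
      linarith
    · apply Int.le_floor.mpr
      have h1 := hc2 i
      have h2 := hxhalf_ub i hi
      have h3 := hxθ i hi
      linarith
  have hord : ∀ i j : ℕ, i < j → j < M → ((a i * b i : ℤ) : ℝ) < ((a j * b j : ℤ) : ℝ) := by
    intro i j hij hj
    have hi : i < M := hij.trans hj
    have h1 := hab2 i
    have h2 := hab1 j
    have h3 := hFi i hi
    have h4 := hFi j hj
    have h5 : x i + d ≤ x j := by
      have hij1 : (i:ℝ) + 1 ≤ (j:ℝ) := by exact_mod_cast hij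
      have := mul_le_mul_of_nonneg_right hij1 hd0.le
      rw [hx_eq i, hx_eq j]; linarith
    linarith [hddef, hR0]
  have hinj : Set.InjOn (fun i => (a i, b i)) ↑(Finset.range M) := by
    intro i hi j hj hpair
    simp only [Finset.coe_range, Set.mem_Iio] at hi hj
    by_contra hne
    have hprod : a i * b i = a j * b j := by
      have e1 : a i = a j := congrArg Prod.fst hpair
      have e2 : b i = b j := congrArg Prod.snd hpair
      rw [e1, e2]
    rcases lt_or_gt_of_ne hne with h | h
    · have := hord i j h hj
      rw [hprod] at this
      exact lt_irrefl _ this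
    · have := hord j i h hi
      rw [hprod] at this
      exact lt_irrefl _ this
  have hcard : M ≤ ((Finset.Icc L U) ×ˢ (Finset.Icc L U)).card := by
    have h1 : ∀ i ∈ Finset.range M, (a i, b i) ∈ (Finset.Icc L U) ×ˢ (Finset.Icc L U) := by
      intro i hi
      rw [Finset.mem_range] at hi
      rw [Finset.mem_product]
      exact ⟨hmem a ha1 ha2 i hi, hmem b hb1 hb2 i hi⟩
    have := Finset.card_le_card_of_injOn (fun i => (a i, b i)) h1 hinj
    simpa using this
  rw [Finset.card_product, Int.card_Icc] at hcard
  by_cases hLU : L ≤ U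
  · have h2 : (0:ℤ) ≤ U + 1 - L := by omega
    have h1 : ((U + 1 - L).toNat : ℝ) ≤ (33/5) * P := by
      rw [show ((U + 1 - L).toNat : ℝ) = (((U + 1 - L).toNat : ℤ) : ℝ) by push_cast; ring,
        Int.toNat_of_nonneg h2]
      push_cast
      have hLle : Q - (3/2) * P ≤ (L:ℝ) := Int.le_ceil _
      have hUle : (U:ℝ) ≤ Q + (41/10) * P := Int.floor_le _
      linarith
    have h3 : (M:ℝ) ≤ ((U+1-L).toNat : ℝ) * ((U+1-L).toNat : ℝ) := by exact_mod_cast hcard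
    have h4 : (0:ℝ) ≤ ((U+1-L).toNat : ℝ) := by positivity
    nlinarith [hMge, hP1]
  · have h0 : (U + 1 - L).toNat = 0 := by omega
    rw [h0] at hcard
    simp at hcard
    rw [hcard] at hMge
    norm_num at hMge
    nlinarith [hP1]
end

section
/- Let c > 0. For every x ≥ 1 and every integer d with c·x^{1/4} < d ≤ 2c·x^{1/4}, if D is an integer with |√(x + d²) − D| ≤ c/x^{1/4}, then |x − (D − d)(D + d)| ≤ c·(2√x + 4c²·√x^{1/2} + 1)·x^{−1/4}, and in particular |x − (D−d)(D+d)| ≤ 10c·x^{1/4} for x large depending on c. -/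
set_option maxHeartbeats 1000000

private lemma key16 (c : ℝ) (hc : 0 < c) (x : ℝ) (hx : 1 ≤ x) (d D : ℤ)
    (h1 : c * x ^ ((1:ℝ)/4) < (d : ℝ)) (h2 : (d : ℝ) ≤ 2 * c * x ^ ((1:ℝ)/4))
    (h3 : |Real.sqrt (x + (d : ℝ) ^ 2) - (D : ℝ)| ≤ c / x ^ ((1:ℝ)/4)) :
    |x - ((D - d : ℤ) : ℝ) * ((D + d : ℤ) : ℝ)|
      ≤ c * (2 * Real.sqrt x + 4 * c ^ 2 * (Real.sqrt x) ^ ((1:ℝ)/2) + 1) * x ^ (-(1:ℝ)/4) := by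
  have hx0 : (0:ℝ) ≤ x := by linarith
  set t : ℝ := x ^ ((1:ℝ)/4) with ht
  have ht1 : 1 ≤ t := Real.one_le_rpow hx (by norm_num)
  have ht0 : (0:ℝ) < t := lt_of_lt_of_le one_pos ht1
  have htsq : t ^ 2 = Real.sqrt x := by
    rw [ht, Real.sqrt_eq_rpow, ← Real.rpow_natCast (x ^ ((1:ℝ)/4)) 2, ← Real.rpow_mul hx0]
    norm_num
  have hsxp : (Real.sqrt x) ^ ((1:ℝ)/2) = t := by
    rw [Real.sqrt_eq_rpow, ← Real.rpow_mul hx0, ht]; norm_num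
  have hneg : x ^ (-(1:ℝ)/4) = t⁻¹ := by
    rw [show (-(1:ℝ)/4) = -((1:ℝ)/4) by ring, Real.rpow_neg hx0, ht]
  set s : ℝ := Real.sqrt x with hs
  have hs1 : 1 ≤ s := by
    nlinarith [htsq, ht1, ht0]
  set S : ℝ := Real.sqrt (x + (d:ℝ)^2) with hS
  have hd0 : (0:ℝ) < d := lt_of_le_of_lt (by positivity) h1
  have hSsq : S ^ 2 = x + (d:ℝ)^2 := Real.sq_sqrt (by positivity)
  have hSd : (d:ℝ) ≤ S := by
    have h' := Real.sqrt_le_sqrt (show (d:ℝ)^2 ≤ x + (d:ℝ)^2 by linarith)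
    rwa [Real.sqrt_sq hd0.le] at h'
  have hSub : S ≤ s + d := by
    have h' : x + (d:ℝ)^2 ≤ (s + d)^2 := by
      have hss : s ^ 2 = x := Real.sq_sqrt hx0
      nlinarith [Real.sqrt_nonneg x]
    calc S ≤ Real.sqrt ((s + d)^2) := Real.sqrt_le_sqrt h'
      _ = s + d := Real.sqrt_sq (by positivity)
  have hSub2 : S ≤ s + (d:ℝ)^2 / (2*s) := by
    have hss : s ^ 2 = x := Real.sq_sqrt hx0
    have h' : x + (d:ℝ)^2 ≤ (s + (d:ℝ)^2/(2*s))^2 := by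
      have hexp : (s + (d:ℝ)^2/(2*s))^2 = s^2 + (d:ℝ)^2 + ((d:ℝ)^2/(2*s))^2 := by
        field_simp
        ring
      rw [hexp, hss]
      nlinarith [sq_nonneg ((d:ℝ)^2/(2*s))]
    calc S ≤ Real.sqrt ((s + (d:ℝ)^2/(2*s))^2) := Real.sqrt_le_sqrt h'
      _ = s + (d:ℝ)^2/(2*s) := Real.sqrt_sq (by positivity)
  obtain ⟨hDlow, hDhigh⟩ := abs_le.mp h3
  have hεc : c / t ≤ c := div_le_self hc.le ht1
  have hct : c ≤ c * t := by nlinarith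
  have hD0 : (0:ℝ) ≤ D := by linarith
  have heq : |x - ((D - d : ℤ) : ℝ) * ((D + d : ℤ) : ℝ)| = |S - D| * (S + D) := by
    push_cast
    rw [show x - ((D:ℝ) - d) * ((D:ℝ) + d) = (S - D) * (S + D) by linear_combination -hSsq,
      abs_mul, abs_of_nonneg (show (0:ℝ) ≤ S + D by linarith)]
  have hbound : S + (D:ℝ) ≤ 2*s + 4*c^2*t + 1 := by
    rcases le_total c 1 with h | h
    · have hd2 : ((d:ℝ)^2) / (2*s) ≤ 2*c^2 := by
        rw [div_le_iff₀ (by positivity)]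
        nlinarith [htsq, mul_self_le_mul_self hd0.le h2]
      linarith [hDhigh, hSub2, hεc, mul_nonneg (sq_nonneg c) (sub_nonneg.mpr ht1)]
    · have h4 : (0:ℝ) ≤ (c - 1) * (4*c*t - 1) := by
        apply mul_nonneg (by linarith)
        nlinarith
      linarith [hDhigh, hSub, hεc, h4]
  rw [heq]
  calc |S - (D:ℝ)| * (S + D) ≤ (c / t) * (2*s + 4*c^2*t + 1) := by
        apply mul_le_mul h3 hbound (by linarith [hSd, hd0]) (by positivity)
    _ = c * (2 * s + 4 * c ^ 2 * s ^ ((1:ℝ)/2) + 1) * x ^ (-(1:ℝ)/4) := by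
        rw [hsxp, hneg]; field_simp

theorem stmt_16 (c : ℝ) (hc : 0 < c) :
    (∀ x : ℝ, 1 ≤ x → ∀ d D : ℤ,
      c * x ^ ((1:ℝ)/4) < (d : ℝ) → (d : ℝ) ≤ 2 * c * x ^ ((1:ℝ)/4) →
      |Real.sqrt (x + (d : ℝ) ^ 2) - (D : ℝ)| ≤ c / x ^ ((1:ℝ)/4) →
      |x - ((D - d : ℤ) : ℝ) * ((D + d : ℤ) : ℝ)|
        ≤ c * (2 * Real.sqrt x + 4 * c ^ 2 * (Real.sqrt x) ^ ((1:ℝ)/2) + 1) * x ^ (-(1:ℝ)/4)) ∧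
    ∃ x₀ : ℝ, ∀ x : ℝ, x₀ ≤ x → ∀ d D : ℤ,
      c * x ^ ((1:ℝ)/4) < (d : ℝ) → (d : ℝ) ≤ 2 * c * x ^ ((1:ℝ)/4) →
      |Real.sqrt (x + (d : ℝ) ^ 2) - (D : ℝ)| ≤ c / x ^ ((1:ℝ)/4) →
      |x - ((D - d : ℤ) : ℝ) * ((D + d : ℤ) : ℝ)| ≤ 10 * c * x ^ ((1:ℝ)/4) := by
  refine ⟨fun x hx d D h1 h2 h3 => key16 c hc x hx d D h1 h2 h3,
    ⟨max 1 ((c^2+1)^4), fun x hx d D h1 h2 h3 => ?_⟩⟩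
  have hx1 : 1 ≤ x := le_trans (le_max_left _ _) hx
  have hx0 : (0:ℝ) ≤ x := by linarith
  set t : ℝ := x ^ ((1:ℝ)/4) with ht
  have ht1 : 1 ≤ t := Real.one_le_rpow hx1 (by norm_num)
  have ht0 : (0:ℝ) < t := lt_of_lt_of_le one_pos ht1
  have htc : c^2 + 1 ≤ t := by
    have hge : ((c^2+1)^4 : ℝ) ≤ x := le_trans (le_max_right _ _) hx
    have h' := Real.rpow_le_rpow (by positivity) hge (by norm_num : (0:ℝ) ≤ 1/4)
    rw [ht]
    refine le_trans (le_of_eq ?_) h'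
    rw [← Real.rpow_natCast (c^2+1) 4, ← Real.rpow_mul (by positivity)]
    norm_num
  have htsq : t ^ 2 = Real.sqrt x := by
    rw [ht, Real.sqrt_eq_rpow, ← Real.rpow_natCast (x ^ ((1:ℝ)/4)) 2, ← Real.rpow_mul hx0]
    norm_num
  have hsxp : (Real.sqrt x) ^ ((1:ℝ)/2) = t := by
    rw [Real.sqrt_eq_rpow, ← Real.rpow_mul hx0, ht]; norm_num
  have hneg : x ^ (-(1:ℝ)/4) = t⁻¹ := by
    rw [show (-(1:ℝ)/4) = -((1:ℝ)/4) by ring, Real.rpow_neg hx0, ht]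
  have key := key16 c hc x hx1 d D h1 h2 h3
  rw [hneg, hsxp, ← htsq] at key
  refine le_trans key ?_
  have h5 : 4*c^2*t + 1 ≤ 8*t^2 := by
    nlinarith [mul_le_mul_of_nonneg_right htc ht0.le]
  rw [← div_eq_mul_inv, div_le_iff₀ ht0]
  nlinarith [mul_le_mul_of_nonneg_left h5 hc.le]
end
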